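/- arXiv:2302.03327 — 2 statements merged into one kernel-verified Lean document; each statement's English description precedes it below -/
import Mathlib

section
/- Let F be a non-trivial increasing family of subsets of a finite set X, k a positive integer, and suppose H is a q-cheap cover of the k-cloned family F_k. Then there exists a kq-cheap cover of F. Consequently, q_c(F_k) ≤ q_c(F)/k. -/
open Finset

variable {α : Type*}

/-- Probability that a `p`-random subset of a finite type `α` lies in the family `F`. -/
noncomputable def probMem [Fintype α] [DecidableEq α] (p : ℝ) (F : Finset (Finset α)) : ℝ :=
  ∑ A ∈ F, p ^ A.card * (1 - p) ^ (Fintype.card α - A.card)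

/-- `F` is an increasing family (up-set). -/
def IncreasingFam [DecidableEq α] (F : Finset (Finset α)) : Prop :=
  ∀ A ∈ F, ∀ B : Finset α, A ⊆ B → B ∈ F

/-- `F` is non-trivial: not empty and not all of `P(X)`. -/
def NontrivialFam [Fintype α] [DecidableEq α] (F : Finset (Finset α)) : Prop :=
  F ≠ ∅ ∧ F ≠ Finset.univ

/-- The `q`-cost of a family `G`. -/
noncomputable def cost [DecidableEq α] (q : ℝ) (G : Finset (Finset α)) : ℝ :=
  ∑ S ∈ G, q ^ S.card

/-- `G` covers `F`: every member of `F` contains some member of `G`. -/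
def Covers [DecidableEq α] (G F : Finset (Finset α)) : Prop :=
  ∀ A ∈ F, ∃ S ∈ G, S ⊆ A

/-- The expectation threshold of `F`. -/
noncomputable def qc [Fintype α] [DecidableEq α] (F : Finset (Finset α)) : ℝ :=
  sSup {q : ℝ | q ∈ Set.Icc (0 : ℝ) 1 ∧
    ∃ G : Finset (Finset α), Covers G F ∧ cost q G ≤ 1 / 2}

/-- The `k`-cloned family `F_k ⊂ P(X × [k])`. -/
def clone [Fintype α] [DecidableEq α] (k : ℕ) (F : Finset (Finset α)) :
    Finset (Finset (α × Fin k)) :=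
  Finset.univ.filter (fun S => S.image Prod.fst ∈ F)

/-- `Ψ(S)`: minimal preimages of `S` under the projection `π : X × [k] → X`. -/
def Psi [Fintype α] [DecidableEq α] (k : ℕ) (S : Finset α) :
    Finset (Finset (α × Fin k)) :=
  Finset.univ.filter (fun S' => S'.image Prod.fst = S ∧ S'.card = S.card)

/-- `l(F)`: the size of a largest minimal element of `F`. -/
def ell [Fintype α] [DecidableEq α] (F : Finset (Finset α)) : ℕ :=
  (F.filter (fun A => ∀ B ⊂ A, B ∉ F)).sup Finset.card

/-! Every `f : α → Fin k` embeds `α` into `α × Fin k` as its graph, and the projections of the members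
of `H` lying on that graph cover `F`. A set `S` lying on some graph satisfies `|π S| = |S|` and lies on
exactly `k ^ (n - |S|)` of the `k ^ n` graphs, so on average over `f` the `kq`-cost of the projected
cover is at most the `q`-cost of `H`. For the threshold, a cheap cover of a nonempty family has
`kq < 1`, so `kq` is admissible in the supremum defining `qc F`. -/

section GraphProjection

variable {β : Type*}

def OnGraph (f : α → β) (S : Finset (α × β)) : Prop :=
  ∀ p ∈ S, f p.1 = p.2

-- A fixed instance, so that filters by `OnGraph` do not depend on the `Fintype` instances in scope.
instance [DecidableEq β] (f : α → β) (S : Finset (α × β)) : Decidable (OnGraph f S) :=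
  inferInstanceAs (Decidable (∀ p ∈ S, f p.1 = p.2))

theorem OnGraph.card_image_fst [DecidableEq α] {f : α → β} {S : Finset (α × β)}
    (hf : OnGraph f S) : #(S.image Prod.fst) = #S :=
  card_image_of_injOn fun p hp p' hp' h =>
    Prod.ext h (by rw [← hf p hp, ← hf p' hp', show p.1 = p'.1 from h])

variable [DecidableEq α] [DecidableEq β]

def graphProj (H : Finset (Finset (α × β))) (f : α → β) : Finset (Finset α) :=
  {S ∈ H | OnGraph f S}.image (image Prod.fst)

theorem mem_graphProj {H : Finset (Finset (α × β))} {f : α → β} {T : Finset α} :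
    T ∈ graphProj H f ↔ ∃ S ∈ H, OnGraph f S ∧ S.image Prod.fst = T := by
  simp [graphProj, and_assoc]

variable [Fintype α] [Fintype β]

theorem card_filter_forall_mem_eq (T : Finset α) (g : α → β) :
    #{f : α → β | ∀ x ∈ T, f x = g x} = Fintype.card β ^ (Fintype.card α - #T) := by
  have h : ({f : α → β | ∀ x ∈ T, f x = g x} : Finset _) =
      Fintype.piFinset fun x => if x ∈ T then {g x} else univ := by
    ext f
    simp only [mem_filter, mem_univ, true_and, Fintype.mem_piFinset]
    refine ⟨fun hf x => ?_, fun hf x hx => by simpa [hx] using hf x⟩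
    split_ifs with hx
    · simp [hf x hx]
    · exact mem_univ _
  simp_rw [h, Fintype.card_piFinset, apply_ite card, card_singleton, card_univ]
  rw [prod_ite, prod_const_one, one_mul, prod_const, filter_not, filter_mem_eq_inter, univ_inter,
    card_univ_sdiff]

theorem OnGraph.card_filter_onGraph {S : Finset (α × β)} {f₀ : α → β} (hf₀ : OnGraph f₀ S) :
    #{f : α → β | OnGraph f S} = Fintype.card β ^ (Fintype.card α - #S) := by
  rw [← hf₀.card_image_fst, ← card_filter_forall_mem_eq _ f₀]
  congr 1
  ext f
  simp only [mem_filter, mem_univ, true_and, forall_mem_image]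
  exact forall₂_congr fun p hp => by rw [hf₀ p hp]

theorem card_filter_mul_pow_le {q : ℝ} (hq : 0 ≤ q) (S : Finset (α × β)) :
    #{f : α → β | OnGraph f S} * (Fintype.card β * q) ^ #(S.image Prod.fst) ≤
      Fintype.card β ^ Fintype.card α * q ^ #S := by
  obtain hempty | ⟨f₀, hf₀⟩ := eq_empty_or_nonempty {f : α → β | OnGraph f S}
  · rw [hempty, card_empty, Nat.cast_zero, zero_mul]
    positivity
  replace hf₀ := (mem_filter.mp hf₀).2
  have hS : #S ≤ Fintype.card α := hf₀.card_image_fst ▸ card_le_univ _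
  rw [hf₀.card_filter_onGraph, hf₀.card_image_fst,
    mul_pow, ← mul_assoc, Nat.cast_pow, ← pow_add, Nat.sub_add_cancel hS]

theorem sum_cost_graphProj_le {q : ℝ} (hq : 0 ≤ q) (H : Finset (Finset (α × β))) :
    ∑ f : α → β, cost (Fintype.card β * q) (graphProj H f) ≤
      Fintype.card β ^ Fintype.card α * cost q H := by
  calc ∑ f : α → β, cost (Fintype.card β * q) (graphProj H f)
      ≤ ∑ f : α → β, ∑ S ∈ H with OnGraph f S,
          ((Fintype.card β : ℝ) * q) ^ #(S.image Prod.fst) :=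
        sum_le_sum fun f _ => by
          unfold cost graphProj
          exact sum_image_le_of_nonneg fun _ _ => by positivity
    _ = ∑ S ∈ H, #{f : α → β | OnGraph f S} *
          ((Fintype.card β : ℝ) * q) ^ #(S.image Prod.fst) := by
        simp_rw [sum_filter]
        rw [sum_comm]
        simp_rw [← sum_filter, sum_const, nsmul_eq_mul]
    _ ≤ Fintype.card β ^ Fintype.card α * cost q H := by
        rw [cost, mul_sum]
        exact sum_le_sum fun S _ => card_filter_mul_pow_le hq S

theorem exists_cost_graphProj_le [Nonempty β] {q : ℝ} (hq : 0 ≤ q)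
    (H : Finset (Finset (α × β))) :
    ∃ f : α → β, cost (Fintype.card β * q) (graphProj H f) ≤ cost q H := by
  have hsum : ∑ f : α → β, cost (Fintype.card β * q) (graphProj H f) ≤
      ∑ _f : α → β, cost q H := by
    rw [sum_const, card_univ, Fintype.card_fun, nsmul_eq_mul, Nat.cast_pow]
    exact sum_cost_graphProj_le hq H
  obtain ⟨f, -, hf⟩ := exists_le_of_sum_le univ_nonempty hsum
  exact ⟨f, hf⟩

end GraphProjection

section Clone

variable [Fintype α] [DecidableEq α] {k : ℕ} {F : Finset (Finset α)}

theorem Covers.graphProj_of_clone {H : Finset (Finset (α × Fin k))}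
    (hH : Covers H (clone k F)) (f : α → Fin k) : Covers (graphProj H f) F := by
  intro A hA
  have hproj : (A.image fun x => (x, f x)).image Prod.fst = A := by
    rw [image_image]
    exact image_id
  obtain ⟨S, hSH, hSA⟩ := hH _ (mem_filter.mpr ⟨mem_univ _, hproj.symm ▸ hA⟩)
  refine ⟨S.image Prod.fst, mem_graphProj.mpr ⟨S, hSH, fun p hp => ?_, rfl⟩,
    hproj ▸ image_subset_image hSA⟩
  obtain ⟨x, -, rfl⟩ := mem_image.mp (hSA hp)
  rfl

theorem exists_covers_cost_le_of_covers_clone (hk : 0 < k) {q : ℝ} (hq : 0 ≤ q)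
    {H : Finset (Finset (α × Fin k))} (hH : Covers H (clone k F)) :
    ∃ G : Finset (Finset α), Covers G F ∧ cost ((k : ℝ) * q) G ≤ cost q H := by
  have : Nonempty (Fin k) := ⟨⟨0, hk⟩⟩
  obtain ⟨f, hf⟩ := exists_cost_graphProj_le hq H
  exact ⟨graphProj H f, hH.graphProj_of_clone f, by simpa using hf⟩

end Clone

section ExpectationThreshold

variable [DecidableEq α] {F G : Finset (Finset α)} {q : ℝ}

theorem lt_one_of_covers_of_cost_lt_one (hF : F.Nonempty) (hG : Covers G F)
    (hcost : cost q G < 1) : q < 1 := by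
  by_contra! h1
  obtain ⟨A, hA⟩ := hF
  obtain ⟨T, hT, -⟩ := hG A hA
  have : q ^ #T ≤ cost q G := single_le_sum (f := fun S => q ^ #S) (fun _ _ => by positivity) hT
  linarith [one_le_pow₀ (n := #T) h1]

variable [Fintype α]

theorem qc_nonneg (F : Finset (Finset α)) : 0 ≤ qc F :=
  Real.sSup_nonneg fun _ hq => hq.1.1

theorem le_qc_of_covers (hq : q ∈ Set.Icc (0 : ℝ) 1) (hG : Covers G F) (hcost : cost q G ≤ 1 / 2) :
    q ≤ qc F :=
  le_csSup ⟨1, fun _ hx => hx.1.2⟩ ⟨hq, G, hG, hcost⟩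

theorem qc_clone_le (hF : F.Nonempty) {k : ℕ} (hk : 0 < k) : qc (clone k F) ≤ qc F / k := by
  have hk' : (0 : ℝ) < k := Nat.cast_pos.mpr hk
  refine Real.sSup_le (fun x ⟨hx, H, hH, hcost⟩ => ?_) (div_nonneg (qc_nonneg F) hk'.le)
  obtain ⟨G, hG, hGcost⟩ := exists_covers_cost_le_of_covers_clone hk hx.1 hH
  have hkx : (k : ℝ) * x ∈ Set.Icc (0 : ℝ) 1 :=
    ⟨mul_nonneg hk'.le hx.1, (lt_one_of_covers_of_cost_lt_one hF hG (by linarith)).le⟩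
  rw [le_div_iff₀ hk', mul_comm]
  exact le_qc_of_covers hkx hG (hGcost.trans hcost)

end ExpectationThreshold

theorem stmt10_general [Fintype α] [DecidableEq α] (F : Finset (Finset α))
    (hnt : NontrivialFam F) (k : ℕ) (hk : 0 < k)
    (q : ℝ) (hq : q ∈ Set.Icc (0 : ℝ) 1)
    (H : Finset (Finset (α × Fin k))) (hH : Covers H (clone k F))
    (hcheap : cost q H ≤ 1 / 2) :
    (∃ G : Finset (Finset α), Covers G F ∧ cost ((k : ℝ) * q) G ≤ 1 / 2) ∧
      qc (clone k F) ≤ qc F / k := by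
  obtain ⟨G, hG, hcost⟩ := exists_covers_cost_le_of_covers_clone hk hq.1 hH
  exact ⟨⟨G, hG, hcost.trans hcheap⟩, qc_clone_le (nonempty_iff_ne_empty.mpr hnt.1) hk⟩

theorem stmt10 [Fintype α] [DecidableEq α] (F : Finset (Finset α))
    (hinc : IncreasingFam F) (hnt : NontrivialFam F) (k : ℕ) (hk : 0 < k)
    (q : ℝ) (hq : q ∈ Set.Icc (0 : ℝ) 1)
    (H : Finset (Finset (α × Fin k))) (hH : Covers H (clone k F))
    (hcheap : cost q H ≤ 1 / 2) :
    (∃ G : Finset (Finset α), Covers G F ∧ cost ((k : ℝ) * q) G ≤ 1 / 2) ∧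
      qc (clone k F) ≤ qc F / k :=
  stmt10_general F hnt k hk q hq H hH hcheap
end

section
/- Let F be a non-trivial increasing family of subsets of a finite set X and k a positive integer. Then q_c(F_k) = q_c(F)/k, where q_c is the expectation threshold and F_k the k-cloned family. -/
open Finset

variable {α : Type*}

/-!
Cloning rescales cheap covers in both directions. If `G` is a `(k q)`-cheap cover of `F`, then
`⋃_{S ∈ G} Ψ(S)` is a `q`-cheap cover of `F_k`, because `|Ψ(S)| ≤ k ^ |S|`. Conversely, let `G'` be
a `q`-cheap cover of `F_k`. For each `f : X → [k]`, the projections of those members of `G'` that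
lie on the graph of `f` cover `F`. A set `S'` lies on the graph of at most `k ^ (|X| - |S'|)`
functions, so the average over the `k ^ |X|` functions `f` of the `(k q)`-costs of these covers is
at most `cost_q(G') ≤ 1/2`. Hence the cheap levels of `F_k` are those of `F` scaled by `1/k`; since
`F` is nonempty, a cheap cover of `F` forces `q < 1`, so the constraint `q ≤ 1` scales as well.
-/

open scoped Pointwise

variable {β : Type*}

lemma image_fst_image_graph [DecidableEq α] [DecidableEq β] (S : Finset α) (f : α → β) :
    (S.image fun a => (a, f a)).image Prod.fst = S := by
  rw [image_image]
  exact image_id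

lemma exists_section [DecidableEq α] [Nonempty β] (A : Finset (α × β)) :
    ∃ f : α → β, ∀ a ∈ A.image Prod.fst, (a, f a) ∈ A := by
  have : ∀ a, ∃ b, a ∈ A.image Prod.fst → (a, b) ∈ A := fun a => by
    by_cases ha : a ∈ A.image Prod.fst
    · obtain ⟨p, hp, rfl⟩ := mem_image.mp ha
      exact ⟨p.2, fun _ => hp⟩
    · exact ⟨Classical.arbitrary β, fun h => absurd h ha⟩
  choose f hf using this
  exact ⟨f, hf⟩

section Graph

variable [Fintype α] [DecidableEq α] [DecidableEq β]

def graph (f : α → β) : Finset (α × β) := univ.image fun a => (a, f a)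

@[simp]
lemma mem_graph {f : α → β} {p : α × β} : p ∈ graph f ↔ f p.1 = p.2 := by
  simp [graph, Prod.ext_iff, eq_comm]

lemma injOn_fst_of_subset_graph {f : α → β} {S : Finset (α × β)} (h : S ⊆ graph f) :
    Set.InjOn Prod.fst (S : Set (α × β)) := fun p hp r hr hpr =>
  Prod.ext hpr <| by rw [← mem_graph.mp (h hp), ← mem_graph.mp (h hr), hpr]

lemma card_image_fst_of_subset_graph {f : α → β} {S : Finset (α × β)} (h : S ⊆ graph f) :
    #(S.image Prod.fst) = #S :=
  card_image_of_injOn (injOn_fst_of_subset_graph h)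

lemma image_graph_image_fst_of_subset_graph {f : α → β} {S : Finset (α × β)}
    (h : S ⊆ graph f) : (S.image Prod.fst).image (fun a => (a, f a)) = S := by
  ext p
  constructor
  · intro hp
    obtain ⟨a, ha, rfl⟩ := mem_image.mp hp
    obtain ⟨r, hr, rfl⟩ := mem_image.mp ha
    rwa [mem_graph.mp (h hr)]
  · intro hp
    exact mem_image.mpr ⟨p.1, mem_image_of_mem _ hp, by rw [mem_graph.mp (h hp)]⟩

lemma image_fst_injOn_subset_graph (f : α → β) :
    Set.InjOn (image Prod.fst) {S : Finset (α × β) | S ⊆ graph f} := fun S hS T hT hST => by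
  rw [← image_graph_image_fst_of_subset_graph hS, ← image_graph_image_fst_of_subset_graph hT,
    hST]

lemma subset_graph_iff_eqOn {f g : α → β} {S : Finset (α × β)} (hg : S ⊆ graph g) :
    S ⊆ graph f ↔ ∀ a ∈ S.image Prod.fst, f a = g a := by
  constructor
  · intro hf a ha
    obtain ⟨p, hp, rfl⟩ := mem_image.mp ha
    rw [mem_graph.mp (hf hp), mem_graph.mp (hg hp)]
  · intro hfg p hp
    rw [mem_graph, hfg _ (mem_image_of_mem _ hp), mem_graph.mp (hg hp)]

lemma card_filter_eqOn [Fintype β] (s : Finset α) (g : α → β) :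
    #{f : α → β | ∀ a ∈ s, f a = g a} = Fintype.card β ^ (Fintype.card α - #s) := by
  have : ({f : α → β | ∀ a ∈ s, f a = g a} : Finset (α → β)) =
      Fintype.piFinset fun a => if a ∈ s then {g a} else univ := by
    ext f
    simp only [mem_filter, mem_univ, true_and, Fintype.mem_piFinset]
    refine forall_congr' fun a => ?_
    split_ifs with ha <;> simp [ha]
  rw [this, Fintype.card_piFinset]
  simp only [apply_ite card, card_singleton, card_univ]
  rw [prod_ite, prod_const_one, one_mul, prod_const, filter_not, filter_mem_eq_inter,
    univ_inter, card_sdiff_of_subset (subset_univ s), card_univ]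

lemma card_filter_subset_graph_mul_le [Fintype β] (S : Finset (α × β)) :
    #{f : α → β | S ⊆ graph f} * Fintype.card β ^ #S
      ≤ Fintype.card β ^ Fintype.card α := by
  rcases isEmpty_or_nonempty {f : α → β // S ⊆ graph f} with hnone | ⟨g, hg⟩
  · rw [filter_false_of_mem fun f _ hf => hnone.false ⟨f, hf⟩, card_empty, zero_mul]
    exact Nat.zero_le _
  · simp_rw [subset_graph_iff_eqOn hg, card_filter_eqOn, ← card_image_fst_of_subset_graph hg,
      ← pow_add, Nat.sub_add_cancel (card_le_univ _), le_rfl]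

end Graph

section Clone

variable [Fintype α] [DecidableEq α] {k : ℕ}

lemma mem_clone {F : Finset (Finset α)} {A : Finset (α × Fin k)} :
    A ∈ clone k F ↔ A.image Prod.fst ∈ F := by
  simp [clone]

lemma mem_Psi {S : Finset α} {T : Finset (α × Fin k)} :
    T ∈ Psi k S ↔ T.image Prod.fst = S ∧ #T = #S := by
  simp [Psi]

lemma image_mem_Psi (S : Finset α) (f : α → Fin k) : S.image (fun a => (a, f a)) ∈ Psi k S :=
  mem_Psi.mpr ⟨image_fst_image_graph S f,
    card_image_of_injective _ fun _ _ h => congrArg Prod.fst h⟩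

lemma exists_image_eq_of_mem_Psi (hk : 0 < k) {S : Finset α} {T : Finset (α × Fin k)}
    (hT : T ∈ Psi k S) : ∃ f : α → Fin k, S.image (fun a => (a, f a)) = T := by
  have : NeZero k := ⟨hk.ne'⟩
  obtain ⟨hTS, hcard⟩ := mem_Psi.mp hT
  obtain ⟨f, hf⟩ := exists_section T
  refine ⟨f, eq_of_subset_of_card_le ?_ ?_⟩
  · rw [← hTS]
    exact image_subset_iff.mpr hf
  · rw [hcard, (mem_Psi.mp (image_mem_Psi S f)).2]

lemma exists_mem_Psi_subset (hk : 0 < k) {S : Finset α} {A : Finset (α × Fin k)}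
    (hS : S ⊆ A.image Prod.fst) : ∃ T ∈ Psi k S, T ⊆ A := by
  have : NeZero k := ⟨hk.ne'⟩
  obtain ⟨f, hf⟩ := exists_section A
  exact ⟨_, image_mem_Psi S f, image_subset_iff.mpr fun a ha => hf a (hS ha)⟩

lemma card_Psi_le (hk : 0 < k) (S : Finset α) : #(Psi k S) ≤ k ^ #S := by
  have hsurj : Set.SurjOn (fun g : S → Fin k => S.attach.image fun a => (a.1, g a))
      (univ : Finset (S → Fin k)) (Psi k S) := by
    intro T hT
    obtain ⟨f, rfl⟩ := exists_image_eq_of_mem_Psi hk hT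
    refine ⟨fun a => f a, mem_coe.mpr (mem_univ _), ?_⟩
    conv_rhs => rw [← attach_image_val (s := S), image_image]
    rfl
  simpa using card_le_card_of_surjOn _ hsurj

lemma Covers.biUnion_Psi (hk : 0 < k) {G F : Finset (Finset α)} (h : Covers G F) :
    Covers (G.biUnion (Psi k)) (clone k F) := by
  intro A hA
  obtain ⟨S, hSG, hSA⟩ := h _ (mem_clone.mp hA)
  obtain ⟨T, hT, hTA⟩ := exists_mem_Psi_subset hk hSA
  exact ⟨T, mem_biUnion.mpr ⟨S, hSG, hT⟩, hTA⟩

lemma cost_biUnion_Psi_le (hk : 0 < k) (G : Finset (Finset α)) {q : ℝ} (hq : 0 ≤ q) :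
    cost q (G.biUnion (Psi k)) ≤ cost (k * q) G := by
  have hdisj : (G : Set (Finset α)).PairwiseDisjoint (Psi k) := fun S _ S' _ hne =>
    disjoint_left.mpr fun T hT hT' => hne ((mem_Psi.mp hT).1.symm.trans (mem_Psi.mp hT').1)
  rw [cost, cost, sum_biUnion hdisj]
  refine sum_le_sum fun S _ => ?_
  calc ∑ T ∈ Psi k S, q ^ #T = #(Psi k S) * q ^ #S := by
        rw [sum_congr rfl fun T hT => by rw [(mem_Psi.mp hT).2], sum_const, nsmul_eq_mul]
    _ ≤ k ^ #S * q ^ #S := by gcongr; exact_mod_cast card_Psi_le hk S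
    _ = (k * q) ^ #S := (mul_pow _ _ _).symm

end Clone

section ProjOnGraph

variable [Fintype α] [DecidableEq α] [DecidableEq β]

def projOnGraph (f : α → β) (G : Finset (Finset (α × β))) : Finset (Finset α) :=
  (G.filter (· ⊆ graph f)).image (image Prod.fst)

lemma cost_projOnGraph (q : ℝ) (f : α → β) (G : Finset (Finset (α × β))) :
    cost q (projOnGraph f G) = ∑ S ∈ G with S ⊆ graph f, q ^ #S := by
  rw [cost, projOnGraph, sum_image]
  · exact sum_congr rfl fun S hS => by rw [card_image_fst_of_subset_graph (mem_filter.mp hS).2]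
  · exact fun S hS T hT =>
      image_fst_injOn_subset_graph f (mem_filter.mp hS).2 (mem_filter.mp hT).2

lemma sum_cost_projOnGraph_le [Fintype β] (G : Finset (Finset (α × β))) {q : ℝ}
    (hq : 0 ≤ q) :
    ∑ f : α → β, cost (Fintype.card β * q) (projOnGraph f G)
      ≤ Fintype.card β ^ Fintype.card α * cost q G := by
  simp_rw [cost_projOnGraph, sum_filter]
  rw [sum_comm, cost, mul_sum]
  refine sum_le_sum fun S _ => ?_
  rw [← sum_filter, sum_const, nsmul_eq_mul, mul_pow, ← mul_assoc]
  gcongr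
  exact_mod_cast card_filter_subset_graph_mul_le S

lemma covers_projOnGraph {k : ℕ} {G : Finset (Finset (α × Fin k))} {F : Finset (Finset α)}
    (h : Covers G (clone k F)) (f : α → Fin k) : Covers (projOnGraph f G) F := by
  intro A hA
  have hproj := image_fst_image_graph A f
  obtain ⟨T, hTG, hTA⟩ := h _ (mem_clone.mpr (hproj ▸ hA))
  have hTf : T ⊆ graph f := hTA.trans (image_subset_image (subset_univ A))
  refine ⟨T.image Prod.fst, mem_image_of_mem _ (mem_filter.mpr ⟨hTG, hTf⟩), ?_⟩
  exact hproj ▸ image_subset_image hTA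

end ProjOnGraph

section CheapCover

variable [DecidableEq α]

def HasCheapCover (q : ℝ) (F : Finset (Finset α)) : Prop :=
  ∃ G, Covers G F ∧ cost q G ≤ 1 / 2

lemma HasCheapCover.lt_one {q : ℝ} {F : Finset (Finset α)} (hF : F.Nonempty)
    (h : HasCheapCover q F) : q < 1 := by
  obtain ⟨G, hcov, hcost⟩ := h
  obtain ⟨A, hA⟩ := hF
  obtain ⟨S, hS, -⟩ := hcov A hA
  by_contra! hq
  have : 1 ≤ cost q G := calc
    1 ≤ q ^ #S := one_le_pow₀ hq
    _ ≤ cost q G := single_le_sum (f := fun T => q ^ #T) (fun T _ => by positivity) hS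
  linarith

variable [Fintype α] {k : ℕ} {q : ℝ} {F : Finset (Finset α)}

lemma HasCheapCover.to_clone (hk : 0 < k) (hq : 0 ≤ q) (h : HasCheapCover (k * q) F) :
    HasCheapCover q (clone k F) :=
  let ⟨G, hcov, hcost⟩ := h
  ⟨G.biUnion (Psi k), hcov.biUnion_Psi hk, (cost_biUnion_Psi_le hk G hq).trans hcost⟩

lemma HasCheapCover.of_clone (hk : 0 < k) (hq : 0 ≤ q) (h : HasCheapCover q (clone k F)) :
    HasCheapCover (k * q) F := by
  obtain ⟨G, hcov, hcost⟩ := h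
  have : NeZero k := ⟨hk.ne'⟩
  have hsum :
      ∑ f : α → Fin k, cost (k * q) (projOnGraph f G) ≤ ∑ _f : α → Fin k, (1 / 2 : ℝ) :=
    calc _ ≤ (k : ℝ) ^ Fintype.card α * cost q G := by
          simpa using sum_cost_projOnGraph_le G hq
      _ ≤ (k : ℝ) ^ Fintype.card α * (1 / 2) := by gcongr
      _ = _ := by simp
  obtain ⟨f, -, hf⟩ := exists_le_of_sum_le univ_nonempty hsum
  exact ⟨projOnGraph f G, covers_projOnGraph hcov f, hf⟩

def cheapLevels (F : Finset (Finset α)) : Set ℝ :=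
  {q | q ∈ Set.Icc 0 1 ∧ HasCheapCover q F}

lemma cheapLevels_clone (hF : F.Nonempty) (hk : 0 < k) :
    cheapLevels (clone k F) = (k : ℝ)⁻¹ • cheapLevels F := by
  have hk' : (0 : ℝ) < k := Nat.cast_pos.mpr hk
  ext q
  rw [Set.mem_smul_set_iff_inv_smul_mem₀ (inv_ne_zero hk'.ne'), inv_inv, smul_eq_mul]
  constructor
  · rintro ⟨⟨hq0, -⟩, h⟩
    have hkq := h.of_clone hk hq0
    exact ⟨⟨by positivity, (hkq.lt_one hF).le⟩, hkq⟩
  · rintro ⟨⟨hkq0, hkq1⟩, h⟩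
    have hq0 : 0 ≤ q := (mul_nonneg_iff_of_pos_left hk').mp hkq0
    have hk1 : (1 : ℝ) ≤ k := Nat.one_le_cast.mpr hk
    exact ⟨⟨hq0, by nlinarith⟩, h.to_clone hk hq0⟩

end CheapCover

theorem stmt11_general [Fintype α] [DecidableEq α] (F : Finset (Finset α))
    (hnt : NontrivialFam F) (k : ℕ) (hk : 0 < k) :
    qc (clone k F) = qc F / k := by
  change sSup (cheapLevels (clone k F)) = sSup (cheapLevels F) / k
  rw [cheapLevels_clone (nonempty_iff_ne_empty.mpr hnt.1) hk,
    Real.sSup_smul_of_nonneg (by positivity), smul_eq_mul, inv_mul_eq_div]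

theorem stmt11 [Fintype α] [DecidableEq α] (F : Finset (Finset α))
    (hinc : IncreasingFam F) (hnt : NontrivialFam F) (k : ℕ) (hk : 0 < k) :
    qc (clone k F) = qc F / k :=
  stmt11_general F hnt k hk
end
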